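/- For every prime p, the group E(p) = ⟨u,v,w | u^p = v^p = w³ = [u,v] = 1, [u,w] = u⁻²v⁻¹, [v,w] = uv⁻¹⟩ has order 3p². -/

import Mathlib

open FreeGroup

/-- The relators of the presentation
`E(p) = ⟨u,v,w | uᵖ = vᵖ = w³ = [u,v] = 1, [u,w] = u⁻²v⁻¹, [v,w] = uv⁻¹⟩`,
with generators `u = of 0`, `v = of 1`, `w = of 2`. -/
def ErelsP (p : ℕ) : Set (FreeGroup (Fin 3)) :=
  let u : FreeGroup (Fin 3) := FreeGroup.of 0
  let v : FreeGroup (Fin 3) := FreeGroup.of 1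
  let w : FreeGroup (Fin 3) := FreeGroup.of 2
  {u ^ p, v ^ p, w ^ 3, u⁻¹ * v⁻¹ * u * v,
   (u⁻¹ * w⁻¹ * u * w) * (u⁻¹ ^ 2 * v⁻¹)⁻¹,
   (v⁻¹ * w⁻¹ * v * w) * (u * v⁻¹)⁻¹}

/-- The group `E(p)`. -/
def E (p : ℕ) : Type := PresentedGroup (ErelsP p)

instance (p : ℕ) : Group (E p) := by unfold E; infer_instance

/-!
`E(p)` is the semidirect product `(C_p × C_p) ⋊ C_3`, the generator of `C_3` acting by
`(x, y) ↦ (y⁻¹, x y⁻¹)` (the matrix `[[0, -1], [1, -1]]`, of order 3). Rewritten with `w³ = 1`,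
the commutator relations say that conjugation by `w` acts on `⟨u, v⟩` exactly in this way, so
`u, v, w ↦ (x, 1), (1, x), c` (with `x`, `c` generators of `C_p`, `C_3`) defines a homomorphism from `E(p)` to the semidirect product, and
conversely any three elements satisfying the relations define a homomorphism out of it. The two
homomorphisms are mutually inverse on generators.
-/

open Multiplicative SemidirectProduct

section CyclicHom

variable {G : Type*} [Group G]

def zmodPowersHom (n : ℕ) (g : G) (hg : g ^ n = 1) : Multiplicative (ZMod n) →* G :=
  AddMonoidHom.toMultiplicativeLeft <|
    ZMod.lift n ⟨zmultiplesHom _ (Additive.ofMul g), by simp [← ofMul_pow, hg]⟩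

theorem zmodPowersHom_intCast (n : ℕ) (g : G) (hg : g ^ n = 1) (k : ℤ) :
    zmodPowersHom n g hg (ofAdd (k : ZMod n)) = g ^ k := by
  simp [zmodPowersHom]

@[simp]
theorem zmodPowersHom_ofAdd_one (n : ℕ) (g : G) (hg : g ^ n = 1) :
    zmodPowersHom n g hg (ofAdd 1) = g := by
  simpa using zmodPowersHom_intCast n g hg 1

theorem exists_zmodPowersHom_eq_zpow {n : ℕ} {g : G} (hg : g ^ n = 1)
    (x : Multiplicative (ZMod n)) : ∃ k : ℤ, zmodPowersHom n g hg x = g ^ k := by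
  obtain ⟨k, hk⟩ := ZMod.intCast_surjective (toAdd x)
  exact ⟨k, by rw [← ofAdd_toAdd x, ← hk, zmodPowersHom_intCast]⟩

theorem ofAdd_intCast_eq_zpow (n : ℕ) (k : ℤ) : ofAdd (k : ZMod n) = ofAdd 1 ^ k := by
  rw [← ofAdd_zsmul, zsmul_one]

theorem ofAdd_one_pow_self (n : ℕ) : ofAdd (1 : ZMod n) ^ n = 1 := by
  rw [← ofAdd_nsmul, nsmul_one, ZMod.natCast_self, ofAdd_zero]

@[ext]
theorem MonoidHom.ext_multiplicative_zmod {n : ℕ} {f f' : Multiplicative (ZMod n) →* G}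
    (h : f (ofAdd 1) = f' (ofAdd 1)) : f = f' := by
  refine MonoidHom.ext fun x => ?_
  obtain ⟨k, hk⟩ := ZMod.intCast_surjective (toAdd x)
  rw [← ofAdd_toAdd x, ← hk, ofAdd_intCast_eq_zpow, map_zpow, map_zpow, h]

end CyclicHom

@[ext]
theorem MonoidHom.prod_ext {M N P : Type*} [Monoid M] [Monoid N] [Monoid P] {f f' : M × N →* P}
    (hl : f.comp (inl M N) = f'.comp (inl M N)) (hr : f.comp (inr M N) = f'.comp (inr M N)) :
    f = f' := by
  ext ⟨x, y⟩
  rw [← Prod.fst_mul_snd (x, y), _root_.map_mul, _root_.map_mul]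
  exact congr_arg₂ (· * ·) (DFunLike.congr_fun hl x) (DFunLike.congr_fun hr y)

section Conjugation

variable {N H : Type*} [Group N] [Group H]

theorem conj_eq_iff_conj_inv_eq {w x y : H} : w * x * w⁻¹ = y ↔ w⁻¹ * y * w = x := by
  constructor <;> rintro rfl <;> group

theorem conj_inv_eq_of_pow_three {w x y : H} (hw : w ^ 3 = 1) (h : w * x * w⁻¹ = y) :
    w⁻¹ * x * w = w * y * w⁻¹ := by
  have hw' : w⁻¹ = w ^ 2 := by rw [eq_comm, ← mul_eq_one_iff_eq_inv, ← pow_succ, hw]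
  rw [← h]
  calc w⁻¹ * x * w = w ^ 2 * x * (w ^ 2)⁻¹ := by rw [← hw', inv_inv]
    _ = w * (w * x * w⁻¹) * w⁻¹ := by simp only [pow_two, mul_inv_rev, mul_assoc]

theorem comp_zpow_eq_conj_zpow_comp {f : N →* H} {a : MulAut N} {b : H}
    (h : f.comp a.toMonoidHom = (MulAut.conj b).toMonoidHom.comp f) (k : ℤ) :
    f.comp (a ^ k).toMonoidHom = (MulAut.conj (b ^ k)).toMonoidHom.comp f := by
  have ha (x : N) : f (a x) = b * f x * b⁻¹ := DFunLike.congr_fun h x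
  have ha_inv (x : N) : f (a⁻¹ x) = b⁻¹ * f x * b := by
    rw [eq_comm, ← conj_eq_iff_conj_inv_eq, ← ha, MulAut.apply_inv_self]
  ext x
  simp only [MonoidHom.comp_apply, MulEquiv.coe_toMonoidHom, MulAut.conj_apply]
  induction k using Int.induction_on generalizing x with
  | zero => simp
  | succ k ih => rw [zpow_add_one, zpow_add_one, MulAut.mul_apply, ih, ha]; group
  | pred k ih => rw [zpow_sub_one, zpow_sub_one, MulAut.mul_apply, ih, ha_inv]; group

theorem comp_eq_conj_comp_of_ofAdd_one {n : ℕ} {φ : Multiplicative (ZMod n) →* MulAut N}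
    {fn : N →* H} {fg : Multiplicative (ZMod n) →* H}
    (h : fn.comp (φ (ofAdd 1)).toMonoidHom = (MulAut.conj (fg (ofAdd 1))).toMonoidHom.comp fn)
    (g : Multiplicative (ZMod n)) :
    fn.comp (φ g).toMonoidHom = (MulAut.conj (fg g)).toMonoidHom.comp fn := by
  obtain ⟨k, hk⟩ := ZMod.intCast_surjective (toAdd g)
  rw [← ofAdd_toAdd g, ← hk, ofAdd_intCast_eq_zpow, map_zpow, map_zpow]
  exact comp_zpow_eq_conj_zpow_comp h k

end Conjugation

/-- The relations of `E(p)`, with the commutator relations turned into the action of `w` by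
conjugation (see `eRelations_iff`). -/
structure ERelations {G : Type*} [Group G] (p : ℕ) (u v w : G) : Prop where
  pow_u : u ^ p = 1
  pow_v : v ^ p = 1
  pow_w : w ^ 3 = 1
  commute : Commute u v
  conj_u : w * u * w⁻¹ = v
  conj_v : w * v * w⁻¹ = u⁻¹ * v⁻¹

theorem eRelations_iff {G : Type*} [Group G] {p : ℕ} {u v w : G} :
    ERelations p u v w ↔ ∀ r ∈ ErelsP p, FreeGroup.lift ![u, v, w] r = 1 := by
  simp only [ErelsP, Set.mem_insert_iff, Set.mem_singleton_iff, forall_eq_or_imp, forall_eq,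
    _root_.map_mul, _root_.map_inv, _root_.map_pow, lift_apply_of, Matrix.cons_val_zero,
    Matrix.cons_val_one, Matrix.cons_val_two, Matrix.head_cons, Matrix.tail_cons]
  have hcomm : u⁻¹ * v⁻¹ * u * v = 1 ↔ Commute u v := by
    rw [show u⁻¹ * v⁻¹ * u * v = (v * u)⁻¹ * (u * v) by group, inv_mul_eq_one, eq_comm]
    rfl
  have hconj_v (huv : Commute u v) :
      v⁻¹ * w⁻¹ * v * w * (u * v⁻¹)⁻¹ = 1 ↔ w * u * w⁻¹ = v := by
    rw [mul_inv_eq_one, mul_assoc, mul_assoc, inv_mul_eq_iff_eq_mul, ← mul_assoc v,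
      huv.symm.mul_inv_cancel, ← mul_assoc, conj_eq_iff_conj_inv_eq]
  have hconj_u (hw : w ^ 3 = 1) (hwu : w * u * w⁻¹ = v) :
      u⁻¹ * w⁻¹ * u * w * (u⁻¹ ^ 2 * v⁻¹)⁻¹ = 1 ↔ w * v * w⁻¹ = u⁻¹ * v⁻¹ := by
    rw [mul_inv_eq_one, mul_assoc, mul_assoc, inv_mul_eq_iff_eq_mul, ← mul_assoc,
      conj_inv_eq_of_pow_three hw hwu, show u * (u⁻¹ ^ 2 * v⁻¹) = u⁻¹ * v⁻¹ by group]
  constructor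
  · rintro ⟨hu, hv, hw, huv, hwu, hwv⟩
    exact ⟨hu, hv, hw, hcomm.2 huv, (hconj_u hw hwu).2 hwv, (hconj_v huv).2 hwu⟩
  · rintro ⟨hu, hv, hw, h4, h5, h6⟩
    have huv := hcomm.1 h4
    have hwu := (hconj_v huv).1 h6
    exact ⟨hu, hv, hw, huv, hwu, (hconj_u hw hwu).1 h5⟩

section Rotation

variable (M : Type*) [CommGroup M]

def prodRotation : MulAut (M × M) where
  toFun x := (x.2⁻¹, x.1 * x.2⁻¹)
  invFun x := (x.2 * x.1⁻¹, x.1⁻¹)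
  left_inv x := by simp
  right_inv x := by simp
  map_mul' x y := by
    ext
    · exact mul_inv _ _
    · simp only [Prod.fst_mul, Prod.snd_mul, mul_inv]; ac_rfl

theorem prodRotation_pow_three : prodRotation M ^ 3 = 1 := by
  ext x <;> simp [pow_succ, prodRotation]

def rotationAction : Multiplicative (ZMod 3) →* MulAut (M × M) :=
  zmodPowersHom 3 (prodRotation M) (prodRotation_pow_three M)

theorem rotationAction_ofAdd_one : rotationAction M (ofAdd 1) = prodRotation M :=
  zmodPowersHom_ofAdd_one _ _ _

abbrev RotationSemidirect := (M × M) ⋊[rotationAction M] Multiplicative (ZMod 3)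

theorem eRelations_rotationSemidirect {p : ℕ} {x : M} (hx : x ^ p = 1) :
    ERelations p (inl (x, 1) : RotationSemidirect M) (inl (1, x)) (inr (ofAdd 1)) := by
  have hconj (y : M × M) : (inr (ofAdd 1) * inl y * (inr (ofAdd 1))⁻¹ : RotationSemidirect M) =
      inl (y.2⁻¹, y.1 * y.2⁻¹) := by
    rw [← _root_.map_inv, ← inl_aut, rotationAction_ofAdd_one]
    rfl
  refine ⟨?_, ?_, ?_, (Commute.all _ _).map inl, ?_, ?_⟩
  · simp [← _root_.map_pow, hx, Prod.mk_one_one]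
  · simp [← _root_.map_pow, hx, Prod.mk_one_one]
  · rw [← _root_.map_pow, ← ofAdd_nsmul]
    rfl
  · rw [hconj]
    simp
  · rw [hconj, ← _root_.map_inv, ← _root_.map_inv, ← _root_.map_mul]
    simp

end Rotation

section SemidirectLift

variable {p : ℕ} {H : Type*} [Group H] {u v w : H}

theorem ERelations.commute_zmodPowersHom (h : ERelations p u v w)
    (x y : Multiplicative (ZMod p)) :
    Commute (zmodPowersHom p u h.pow_u x) (zmodPowersHom p v h.pow_v y) := by
  obtain ⟨k, hk⟩ := exists_zmodPowersHom_eq_zpow h.pow_u x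
  obtain ⟨l, hl⟩ := exists_zmodPowersHom_eq_zpow h.pow_v y
  rw [hk, hl]
  exact h.commute.zpow_zpow k l

def ERelations.semidirectLift (h : ERelations p u v w) :
    RotationSemidirect (Multiplicative (ZMod p)) →* H :=
  SemidirectProduct.lift
    ((zmodPowersHom p u h.pow_u).noncommCoprod (zmodPowersHom p v h.pow_v)
      h.commute_zmodPowersHom)
    (zmodPowersHom 3 w h.pow_w)
    (comp_eq_conj_comp_of_ofAdd_one <| by
      rw [rotationAction_ofAdd_one, zmodPowersHom_ofAdd_one]
      ext
      · simpa [prodRotation] using h.conj_u.symm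
      · simpa [prodRotation] using h.conj_v.symm)

end SemidirectLift

/- Stated for `PresentedGroup (ErelsP p)` rather than `E p`: the group instance on `E p` is a
cast along the unfolding of `E` and does not unify with the one the presented-group lemmas use.
The cardinality only sees the underlying type. -/
namespace E

variable (p : ℕ)

def lift {H : Type*} [Group H] {u v w : H} (h : ERelations p u v w) :
    PresentedGroup (ErelsP p) →* H :=
  PresentedGroup.toGroup (eRelations_iff.1 h)

theorem eRelations_of : ERelations p (.of 0 : PresentedGroup (ErelsP p)) (.of 1) (.of 2) := by
  have hof : (![.of 0, .of 1, .of 2] : Fin 3 → PresentedGroup (ErelsP p)) = PresentedGroup.of := by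
    ext i; fin_cases i <;> rfl
  have hmk : FreeGroup.lift (PresentedGroup.of (rels := ErelsP p)) = PresentedGroup.mk _ := by
    ext; simp [PresentedGroup.of]
  rw [eRelations_iff, hof, hmk]
  exact fun r hr => PresentedGroup.one_of_mem hr

def mulEquivRotationSemidirect :
    PresentedGroup (ErelsP p) ≃* RotationSemidirect (Multiplicative (ZMod p)) :=
  MonoidHom.toMulEquiv
    (lift p (eRelations_rotationSemidirect _ (ofAdd_one_pow_self p)))
    (eRelations_of p).semidirectLift
    (PresentedGroup.ext fun i => by fin_cases i <;> simp [lift, ERelations.semidirectLift])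
    (by
      refine SemidirectProduct.hom_ext (MonoidHom.prod_ext ?_ ?_) ?_ <;>
        exact MonoidHom.ext_multiplicative_zmod (by simp [lift, ERelations.semidirectLift]))

end E

theorem card_E_general (p : ℕ) : Nat.card (E p) = 3 * p ^ 2 := by
  have hcard (n : ℕ) : Nat.card (Multiplicative (ZMod n)) = n :=
    (Nat.card_congr toAdd).trans (Nat.card_zmod n)
  calc Nat.card (E p) = Nat.card (RotationSemidirect (Multiplicative (ZMod p))) :=
        Nat.card_congr (E.mulEquivRotationSemidirect p).toEquiv
    _ = 3 * p ^ 2 := by rw [SemidirectProduct.card, Nat.card_prod, hcard, hcard]; ring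

theorem card_E (p : ℕ) (hp : p.Prime) : Nat.card (E p) = 3 * p ^ 2 :=
  card_E_general p
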